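/- Let R be a commutative ring and let z_1, z_2, z_3, z_4, z_5, z_6, z_7, y be vectors in R^4. Define v' := ⟨z_2 z_3 z_4 z_5⟩ z_1 − ⟨z_1 z_3 z_4 z_5⟩ z_2 (the intersection point of the line z_1z_2 with the plane z_3z_4z_5) and w' := ⟨z_7 z_3 z_4 z_5⟩ z_6 − ⟨z_6 z_3 z_4 z_5⟩ z_7 (the intersection point of the line z_6z_7 with the plane z_3z_4z_5). Then: (a) ⟨z_1 v' w' y⟩ = ⟨z_1 z_3 z_4 z_5⟩ · (⟨z_3 z_4 z_5 z_7⟩⟨z_1 z_2 z_6 y⟩ − ⟨z_3 z_4 z_5 z_6⟩⟨z_1 z_2 z_7 y⟩); (b) ⟨v' w' z_7 y⟩ = ⟨z_3 z_4 z_5 z_7⟩ · (⟨z_1 z_3 z_4 z_5⟩⟨z_2 z_6 z_7 y⟩ − ⟨z_2 z_3 z_4 z_5⟩⟨z_1 z_6 z_7 y⟩). In particular, the pullback along the coplanar (white) three-mass-box promotion map sends initial-cluster Plücker coordinates to products of cluster variables (Plücker coordinates and quadratic chain polynomials). -/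

import Mathlib

/-- The determinant of the 4×4 matrix with columns `w, x, y, z`. -/
def det4 {R : Type*} [CommRing R] (w x y z : Fin 4 → R) : R :=
  Matrix.det (Matrix.of fun i j => ![w, x, y, z] j i)

private lemma det4_expand {R : Type*} [CommRing R] (w x y z : Fin 4 → R) :
    det4 w x y z = w 0 * x 1 * y 2 * z 3 - w 0 * x 1 * y 3 * z 2
      - w 0 * x 2 * y 1 * z 3 + w 0 * x 2 * y 3 * z 1
      + w 0 * x 3 * y 1 * z 2 - w 0 * x 3 * y 2 * z 1
      - w 1 * x 0 * y 2 * z 3 + w 1 * x 0 * y 3 * z 2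
      + w 1 * x 2 * y 0 * z 3 - w 1 * x 2 * y 3 * z 0
      - w 1 * x 3 * y 0 * z 2 + w 1 * x 3 * y 2 * z 0
      + w 2 * x 0 * y 1 * z 3 - w 2 * x 0 * y 3 * z 1
      - w 2 * x 1 * y 0 * z 3 + w 2 * x 1 * y 3 * z 0
      + w 2 * x 3 * y 0 * z 1 - w 2 * x 3 * y 1 * z 0
      - w 3 * x 0 * y 1 * z 2 + w 3 * x 0 * y 2 * z 1
      + w 3 * x 1 * y 0 * z 2 - w 3 * x 1 * y 2 * z 0
      - w 3 * x 2 * y 0 * z 1 + w 3 * x 2 * y 1 * z 0 := by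
  simp [det4, Matrix.det_succ_row_zero, Fin.sum_univ_succ, Fin.succAbove]
  ring

private lemma det4_col1 {R : Type*} [CommRing R] (a b : R) (x x' y z u : Fin 4 → R) :
    det4 (a • x - b • x') y z u = a * det4 x y z u - b * det4 x' y z u := by
  simp only [det4_expand, Pi.sub_apply, Pi.smul_apply, smul_eq_mul]; ring

private lemma det4_col2 {R : Type*} [CommRing R] (a b : R) (w x x' z u : Fin 4 → R) :
    det4 w (a • x - b • x') z u = a * det4 w x z u - b * det4 w x' z u := by
  simp only [det4_expand, Pi.sub_apply, Pi.smul_apply, smul_eq_mul]; ring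

private lemma det4_col3 {R : Type*} [CommRing R] (a b : R) (w x y y' u : Fin 4 → R) :
    det4 w x (a • y - b • y') u = a * det4 w x y u - b * det4 w x y' u := by
  simp only [det4_expand, Pi.sub_apply, Pi.smul_apply, smul_eq_mul]; ring

private lemma det4_rep12 {R : Type*} [CommRing R] (x y z : Fin 4 → R) :
    det4 x x y z = 0 := by
  simp only [det4_expand]; ring

private lemma det4_rep23 {R : Type*} [CommRing R] (w x z : Fin 4 → R) :
    det4 w x x z = 0 := by
  simp only [det4_expand]; ring

private lemma det4_rotate {R : Type*} [CommRing R] (w x y z : Fin 4 → R) :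
    det4 w x y z = -det4 x y z w := by
  simp only [det4_expand]; ring

/-- **Determinant identities for the white (coplanar) three-mass-box promotion map.**
With `v' := ⟨z₂z₃z₄z₅⟩z₁ − ⟨z₁z₃z₄z₅⟩z₂` (the point `(z₁z₂) ⋆ (z₃z₄z₅)`) and
`w' := ⟨z₇z₃z₄z₅⟩z₆ − ⟨z₆z₃z₄z₅⟩z₇` (the point `(z₆z₇) ⋆ (z₃z₄z₅)`):
(a) `⟨z₁ v' w' y⟩ = ⟨z₁z₃z₄z₅⟩·(⟨z₃z₄z₅z₇⟩⟨z₁z₂z₆y⟩ − ⟨z₃z₄z₅z₆⟩⟨z₁z₂z₇y⟩)`;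
(b) `⟨v' w' z₇ y⟩ = ⟨z₃z₄z₅z₇⟩·(⟨z₁z₃z₄z₅⟩⟨z₂z₆z₇y⟩ − ⟨z₂z₃z₄z₅⟩⟨z₁z₆z₇y⟩)`.
These say that the pullback along the white three-mass-box promotion map sends
initial-cluster Plücker coordinates to products of cluster variables. -/
theorem whitePromotion_cluster_identities
    {R : Type*} [CommRing R] (z1 z2 z3 z4 z5 z6 z7 y : Fin 4 → R) :
    let v' := det4 z2 z3 z4 z5 • z1 - det4 z1 z3 z4 z5 • z2
    let w' := det4 z7 z3 z4 z5 • z6 - det4 z6 z3 z4 z5 • z7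
    det4 z1 v' w' y =
      det4 z1 z3 z4 z5 *
        (det4 z3 z4 z5 z7 * det4 z1 z2 z6 y - det4 z3 z4 z5 z6 * det4 z1 z2 z7 y) ∧
    det4 v' w' z7 y =
      det4 z3 z4 z5 z7 *
        (det4 z1 z3 z4 z5 * det4 z2 z6 z7 y - det4 z2 z3 z4 z5 * det4 z1 z6 z7 y) := by
  intro v' w'
  have h7 : det4 z7 z3 z4 z5 = -det4 z3 z4 z5 z7 := det4_rotate _ _ _ _
  have h6 : det4 z6 z3 z4 z5 = -det4 z3 z4 z5 z6 := det4_rotate _ _ _ _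
  constructor
  · simp only [v', w', det4_col2, det4_col3, det4_rep12, h6, h7]
    ring
  · simp only [v', w', det4_col1, det4_col2, det4_col3, det4_rep12, det4_rep23, h6, h7]
    ring
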